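/- arXiv:2108.02777 — 8 statements merged into one kernel-verified Lean document; each statement's English description precedes it below -/
import Mathlib

section
/- Let G be a simple graph on {1,...,n} and t, p ∈ ℤⁿ. If G_0 ≥ G_1 ≥ ... ≥ G_m and G'_0 ≥ G'_1 ≥ ... ≥ G'_m are two [t,p]-separate chains of G (padded with empty graphs to a common length m), then the entrywise union chain H_0 ≥ H_1 ≥ ... ≥ H_m, where H_i is the subgraph of G induced by V(G_i) ∪ V(G'_i), is also a [t,p]-separate chain of G. -/
open Finset

/-- A (padded) `[t,p]`-separate chain of the induced subgraph of `G` on the vertex set `A`: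
an antitone sequence of vertex sets starting at `A` (padded with `∅` beyond its size) such
that every vertex `v` in the `i`-th member has at least `max {0, i + p v}` neighbors in the
`i`-th member and at least `i` neighbors in the `max {0, i + t v}`-th member. -/
def SepChainFrom {n : ℕ} (G : SimpleGraph (Fin n)) [DecidableRel G.Adj]
    (t p : Fin n → ℤ) (A : Finset (Fin n)) (S : ℕ → Finset (Fin n)) : Prop :=
  S 0 = A ∧
  (∀ i, S (i + 1) ⊆ S i) ∧
  (∀ i, ∀ v ∈ S i,
    max 0 ((i : ℤ) + p v) ≤ (((S i).filter (G.Adj v)).card : ℤ) ∧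
    (i : ℤ) ≤ (((S (((i : ℤ) + t v).toNat)).filter (G.Adj v)).card : ℤ))

/-- A `[t,p]`-separate chain of `G` itself. -/
def SepChain {n : ℕ} (G : SimpleGraph (Fin n)) [DecidableRel G.Adj]
    (t p : Fin n → ℤ) (S : ℕ → Finset (Fin n)) : Prop :=
  SepChainFrom G t p Finset.univ S

/-- A `[t,p]`-separate chain of `G` of length `m`, written as an `ℕ`-indexed chain
padded with empty graphs beyond `m`. -/
def SepChainLen {n : ℕ} (G : SimpleGraph (Fin n)) [DecidableRel G.Adj]
    (t p : Fin n → ℤ) (m : ℕ) (S : ℕ → Finset (Fin n)) : Prop :=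
  (∀ i, m < i → S i = ∅) ∧ SepChain G t p S

/-- The entrywise union of two `[t,p]`-separate chains of `G` (padded to a
common length `m`) is again a `[t,p]`-separate chain of `G`. -/
theorem union_sepChain {n : ℕ} (G : SimpleGraph (Fin n)) [DecidableRel G.Adj]
    (t p : Fin n → ℤ) (m : ℕ) (S S' : ℕ → Finset (Fin n))
    (h : SepChainLen G t p m S) (h' : SepChainLen G t p m S') :
    SepChainLen G t p m (fun i => S i ∪ S' i) := by
  obtain ⟨hlen, h0, hsub, hdeg⟩ := h
  obtain ⟨hlen', h0', hsub', hdeg'⟩ := h'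
  refine ⟨fun i hi => by simp [hlen i hi, hlen' i hi], by simp [h0, h0'], fun i => union_subset_union (hsub i) (hsub' i), fun i v hv => ?_⟩
  rcases mem_union.mp hv with hv | hv
  · obtain ⟨c1, c2⟩ := hdeg i v hv
    constructor
    · exact c1.trans (by exact_mod_cast card_le_card (filter_subset_filter _ subset_union_left))
    · exact c2.trans (by exact_mod_cast card_le_card (filter_subset_filter _ subset_union_left))
  · obtain ⟨c1, c2⟩ := hdeg' i v hv
    constructor
    · exact c1.trans (by exact_mod_cast card_le_card (filter_subset_filter _ subset_union_right))
    · exact c2.trans (by exact_mod_cast card_le_card (filter_subset_filter _ subset_union_right))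
end

section
/- Let G be a simple graph on {1,...,n} and t, p ∈ ℤⁿ with p_v ≤ deg_G(v) for all v. Then there exists a unique maximal [t,p]-separate chain of G, i.e., a chain C such that no [t,p]-separate chain C' has larger size, and no chain C' of equal size satisfies G_i ⊊ G'_i (as induced subgraphs) for some i. -/
open Finset

/-- The size of a chain: the largest `k` (at most `n`) with `S k` nonempty. -/
noncomputable def chainSize {n : ℕ} (S : ℕ → Finset (Fin n)) : ℕ :=
  Nat.findGreatest (fun k => (S k).Nonempty) n

/-- A maximal `[t,p]`-separate chain: no `[t,p]`-separate chain has larger size, and none of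
equal size strictly exceeds it at some index `1 ≤ i ≤` size. -/
noncomputable def MaximalSepChain {n : ℕ} (G : SimpleGraph (Fin n)) [DecidableRel G.Adj]
    (t p : Fin n → ℤ) (S : ℕ → Finset (Fin n)) : Prop :=
  SepChain G t p S ∧
  ∀ S' : ℕ → Finset (Fin n), SepChain G t p S' →
    ¬ (chainSize S < chainSize S' ∨
       (chainSize S' = chainSize S ∧ ∃ i, 1 ≤ i ∧ i ≤ chainSize S ∧ S i ⊂ S' i))

open Classical in
/-- The pointwise union of all `[t,p]`-separate chains. -/
noncomputable def bigChain {n : ℕ} (G : SimpleGraph (Fin n)) [DecidableRel G.Adj]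
    (t p : Fin n → ℤ) : ℕ → Finset (Fin n) :=
  fun i => Finset.univ.filter (fun v => ∃ S, SepChain G t p S ∧ v ∈ S i)

lemma subset_bigChain {n : ℕ} (G : SimpleGraph (Fin n)) [DecidableRel G.Adj]
    (t p : Fin n → ℤ) {S : ℕ → Finset (Fin n)} (hS : SepChain G t p S) (i : ℕ) :
    S i ⊆ bigChain G t p i := by
  intro v hv
  simp only [bigChain, mem_filter, mem_univ, true_and]
  exact ⟨S, hS, hv⟩

lemma trivChain_sepChain {n : ℕ} (G : SimpleGraph (Fin n)) [DecidableRel G.Adj]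
    (t p : Fin n → ℤ) (hp : ∀ v : Fin n, p v ≤ (G.degree v : ℤ)) :
    SepChain G t p (fun i => if i = 0 then Finset.univ else ∅) := by
  have hdeg : ∀ v : Fin n, (Finset.univ.filter (G.Adj v)) = G.neighborFinset v := by
    intro v; ext w; simp [SimpleGraph.mem_neighborFinset]
  refine ⟨by simp, ?_, ?_⟩
  · intro i; simp
  · intro i v hv
    rcases Nat.eq_zero_or_pos i with rfl | hi
    · constructor
      · have h1 : (Finset.univ.filter (G.Adj v)).card = G.degree v := by
          rw [hdeg v]; rfl
        show 0 ⊔ ((0:ℕ) + p v) ≤ ((Finset.univ.filter (G.Adj v)).card : ℤ)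
        rw [h1]
        exact max_le (by positivity) (by simpa using hp v)
      · simp
    · simp only [Nat.pos_iff_ne_zero.mp hi, if_neg (Nat.pos_iff_ne_zero.mp hi)] at hv
      exact absurd hv (by simp [Nat.pos_iff_ne_zero.mp hi])

lemma bigChain_sepChain {n : ℕ} (G : SimpleGraph (Fin n)) [DecidableRel G.Adj]
    (t p : Fin n → ℤ) (hp : ∀ v : Fin n, p v ≤ (G.degree v : ℤ)) :
    SepChain G t p (bigChain G t p) := by
  refine ⟨?_, ?_, ?_⟩
  · apply Finset.eq_univ_of_forall
    intro v
    simp only [bigChain, mem_filter, mem_univ, true_and]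
    exact ⟨_, trivChain_sepChain G t p hp, by simp [(trivChain_sepChain G t p hp).1]⟩
  · intro i v hv
    simp only [bigChain, mem_filter, mem_univ, true_and] at hv ⊢
    obtain ⟨S, hS, hvS⟩ := hv
    exact ⟨S, hS, hS.2.1 i hvS⟩
  · intro i v hv
    simp only [bigChain, mem_filter, mem_univ, true_and] at hv
    obtain ⟨S, hS, hvS⟩ := hv
    obtain ⟨h1, h2⟩ := hS.2.2 i v hvS
    constructor
    · refine h1.trans ?_
      exact_mod_cast Finset.card_le_card
        (Finset.filter_subset_filter _ (subset_bigChain G t p hS i))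
    · refine h2.trans ?_
      exact_mod_cast Finset.card_le_card
        (Finset.filter_subset_filter _ (subset_bigChain G t p hS _))

lemma sepChain_empty_of_gt {n : ℕ} (G : SimpleGraph (Fin n)) [DecidableRel G.Adj]
    (t p : Fin n → ℤ) {S : ℕ → Finset (Fin n)} (hS : SepChain G t p S) {i : ℕ}
    (hi : chainSize S < i) : S i = ∅ := by
  by_contra h
  obtain ⟨v, hv⟩ := Finset.nonempty_iff_ne_empty.2 h
  have h2 := (hS.2.2 i v hv).2
  have hcard : (((S (((i : ℤ) + t v).toNat)).filter (G.Adj v)).card : ℤ) ≤ n := by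
    exact_mod_cast (Finset.card_filter_le _ _).trans
      ((Finset.card_le_univ _).trans (by simp))
  have hin : i ≤ n := by exact_mod_cast h2.trans hcard
  have := Nat.le_findGreatest (P := fun k => (S k).Nonempty) hin ⟨v, hv⟩
  exact absurd this (by simpa [chainSize] using hi)

lemma chainSize_le_of_subset {n : ℕ} {S T : ℕ → Finset (Fin n)}
    (h : ∀ i, S i ⊆ T i) : chainSize S ≤ chainSize T :=
  Nat.findGreatest_mono (fun k hk => hk.mono (h k)) le_rfl

/-- If `p v ≤ deg v` for all `v`, there is a unique maximal
`[t,p]`-separate chain of `G`. -/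
theorem existsUnique_maximalSepChain {n : ℕ} (G : SimpleGraph (Fin n)) [DecidableRel G.Adj]
    (t p : Fin n → ℤ) (hp : ∀ v : Fin n, p v ≤ (G.degree v : ℤ)) :
    ∃! S : ℕ → Finset (Fin n), MaximalSepChain G t p S := by
  set M := bigChain G t p with hM
  have hMchain := bigChain_sepChain G t p hp
  have hsub : ∀ S, SepChain G t p S → ∀ i, S i ⊆ M i :=
    fun S hS i => subset_bigChain G t p hS i
  have hMmax : MaximalSepChain G t p M := by
    refine ⟨hMchain, ?_⟩
    rintro S' hS' (hlt | ⟨heq, i, hi1, hi2, hss⟩)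
    · exact absurd (chainSize_le_of_subset (hsub S' hS')) (by omega)
    · exact absurd (hsub S' hS' i) (by intro h; exact hss.not_subset h)
  refine ⟨M, hMmax, ?_⟩
  intro T hT
  have hTsub := hsub T hT.1
  have hsize : chainSize T = chainSize M := by
    have h1 : chainSize T ≤ chainSize M := chainSize_le_of_subset hTsub
    have h2 := hT.2 M hMchain
    omega
  funext i
  rcases Nat.eq_zero_or_pos i with rfl | hi
  · exact hT.1.1.trans hMchain.1.symm
  rcases le_or_gt i (chainSize T) with hle | hgt
  · by_contra hne
    exact hT.2 M hMchain (Or.inr ⟨hsize.symm, i, hi, hle,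
      Finset.ssubset_iff_subset_ne.2 ⟨hTsub i, hne⟩⟩)
  · have hM0 : M i = ∅ := sepChain_empty_of_gt G t p hMchain (hsize ▸ hgt)
    have := hTsub i
    rw [hM0] at this
    rw [hM0, Finset.subset_empty.mp this]
end

section
/- Let G be a simple graph on {1,...,n}, t, p ∈ ℤⁿ with p ≤ d (the degree sequence), and let C_{t,p}(v) = i where v ∈ G_i but v ∉ G_{i+1} in the maximal [t,p]-separate chain of G. Then the state vector z = (C_{t,p}(1), ..., C_{t,p}(n)) is a fixed point of the [t,p]-system on G, i.e., f_v(z) = C_{t,p}(v) for every vertex v. -/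
open Finset

open Classical in
/-- `rank G t p v = C_{t,p}(v)`, the largest `i` such that `v` belongs to the `i`-th member of
some (equivalently, of the maximal) `[t,p]`-separate chain of `G`. -/
noncomputable def rank {n : ℕ} (G : SimpleGraph (Fin n)) [DecidableRel G.Adj]
    (t p : Fin n → ℤ) (v : Fin n) : ℕ :=
  Nat.findGreatest (fun i => ∃ S : ℕ → Finset (Fin n), SepChain G t p S ∧ v ∈ S i) n

section Aux

variable {n : ℕ} (G : SimpleGraph (Fin n)) [DecidableRel G.Adj] (t p : Fin n → ℤ)

lemma chain_anti {S : ℕ → Finset (Fin n)} (h : ∀ i, S (i + 1) ⊆ S i) :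
    ∀ {i j : ℕ}, i ≤ j → S j ⊆ S i := by
  intro i j hij
  induction j with
  | zero => simp_all
  | succ j ih =>
    rcases Nat.lt_or_ge i (j + 1) with h' | h'
    · exact (h j).trans (ih (Nat.lt_succ_iff.mp h'))
    · have : i = j + 1 := le_antisymm hij h'
      subst this; exact subset_rfl

lemma filter_card_le_degree (S : Finset (Fin n)) (v : Fin n) :
    (S.filter (G.Adj v)).card ≤ G.degree v := by
  rw [← SimpleGraph.card_neighborFinset_eq_degree, SimpleGraph.neighborFinset_eq_filter]
  exact card_le_card (filter_subset_filter _ (subset_univ _))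

lemma mem_chain_le {S : ℕ → Finset (Fin n)} (hS : SepChain G t p S) {v : Fin n} {i : ℕ}
    (hv : v ∈ S i) : i ≤ n := by
  have h := (hS.2.2 i v hv).2
  have h2 := filter_card_le_degree G (S (((i : ℤ) + t v).toNat)) v
  have h3 := G.degree_lt_card_verts v
  simp only [Fintype.card_fin] at h3
  omega

lemma rank_ge {S : ℕ → Finset (Fin n)} (hS : SepChain G t p S) {v : Fin n} {i : ℕ}
    (hv : v ∈ S i) : i ≤ rank G t p v := by
  classical
  unfold rank
  exact Nat.le_findGreatest (mem_chain_le G t p hS hv) ⟨S, hS, hv⟩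

lemma rank_le_n (v : Fin n) : rank G t p v ≤ n := by
  classical
  unfold rank; exact Nat.findGreatest_le n

lemma trivChain (hp : ∀ v : Fin n, p v ≤ (G.degree v : ℤ)) :
    SepChain G t p (fun i => if i = 0 then Finset.univ else ∅) := by
  refine ⟨by simp, fun i => by simp, fun i v hv => ?_⟩
  by_cases hi : i = 0
  · subst hi
    simp only [if_pos rfl]
    constructor
    · have := hp v
      have h2 := filter_card_le_degree G (Finset.univ : Finset (Fin n)) v
      have h3 : G.degree v ≤ ((Finset.univ : Finset (Fin n)).filter (G.Adj v)).card := by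
        rw [← SimpleGraph.card_neighborFinset_eq_degree, SimpleGraph.neighborFinset_eq_filter]
      push_cast
      rw [max_le_iff]
      constructor
      · positivity
      · omega
    · positivity
  · simp [hi] at hv

lemma mem_rank (hp : ∀ v : Fin n, p v ≤ (G.degree v : ℤ)) (v : Fin n) :
    ∃ S : ℕ → Finset (Fin n), SepChain G t p S ∧ v ∈ S (rank G t p v) := by
  have h0 : ∃ S : ℕ → Finset (Fin n), SepChain G t p S ∧ v ∈ S 0 :=
    ⟨_, trivChain G t p hp, by simp⟩
  classical
  unfold rank
  exact Nat.findGreatest_spec (P := fun i => ∃ S : ℕ → Finset (Fin n), SepChain G t p S ∧ v ∈ S i) (Nat.zero_le n) h0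

noncomputable def Mset (i : ℕ) : Finset (Fin n) :=
  Finset.univ.filter (fun v => i ≤ rank G t p v)

lemma mem_Mset {i : ℕ} {v : Fin n} : v ∈ Mset G t p i ↔ i ≤ rank G t p v := by
  simp [Mset]

lemma Mset_anti {i j : ℕ} (h : i ≤ j) : Mset G t p j ⊆ Mset G t p i := by
  intro u hu
  rw [mem_Mset] at *
  omega

lemma M_sepchain (hp : ∀ v : Fin n, p v ≤ (G.degree v : ℤ)) :
    SepChain G t p (Mset G t p) := by
  refine ⟨by simp [Mset], fun i => Mset_anti G t p (Nat.le_succ i), fun i v hv => ?_⟩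
  rw [mem_Mset] at hv
  obtain ⟨S, hS, hvS⟩ := mem_rank G t p hp v
  have hvi : v ∈ S i := chain_anti hS.2.1 hv hvS
  obtain ⟨h1, h2⟩ := hS.2.2 i v hvi
  have hsub : ∀ j, S j ⊆ Mset G t p j := fun j u hu =>
    (mem_Mset G t p).mpr (rank_ge G t p hS hu)
  constructor
  · refine h1.trans ?_
    exact_mod_cast card_le_card (filter_subset_filter _ (hsub i))
  · refine h2.trans ?_
    exact_mod_cast card_le_card (filter_subset_filter _ (hsub _))

end Aux

open Classical in
/-- The local update function of the `[t,p]`-system: `localF G t p x v` is the maximum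
`k ∈ {0,…,n}` such that at least `k` neighbors of `v` have value `≥ k + t v` in `x` and at
least `max {0, k + p v}` neighbors of `v` have value `≥ k` in `x`. -/
noncomputable def localF {n : ℕ} (G : SimpleGraph (Fin n)) [DecidableRel G.Adj]
    (t p : Fin n → ℤ) (x : Fin n → ℕ) (v : Fin n) : ℕ :=
  Nat.findGreatest (fun k =>
    (k : ℤ) ≤ ((Finset.univ.filter (fun u => G.Adj v u ∧ (k : ℤ) + t v ≤ (x u : ℤ))).card : ℤ) ∧
    max 0 ((k : ℤ) + p v) ≤
      ((Finset.univ.filter (fun u => G.Adj v u ∧ k ≤ x u)).card : ℤ)) n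

/-- The vector of ranks `(C_{t,p}(1),…,C_{t,p}(n))` of the maximal
`[t,p]`-separate chain is a fixed point of the `[t,p]`-system on `G`. -/
theorem rank_isFixedPoint {n : ℕ} (G : SimpleGraph (Fin n)) [DecidableRel G.Adj]
    (t p : Fin n → ℤ) (hp : ∀ v : Fin n, p v ≤ (G.degree v : ℤ)) :
    ∀ v : Fin n, localF G t p (fun u => rank G t p u) v = rank G t p v := by
  intro v
  classical
  set r := rank G t p v with hr
  have hvM : v ∈ Mset G t p r := (mem_Mset G t p).mpr le_rfl
  obtain ⟨h1, h2⟩ := (M_sepchain G t p hp).2.2 r v hvM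
  have hPr1 : (r : ℤ) ≤
      ((Finset.univ.filter (fun u => G.Adj v u ∧ (r : ℤ) + t v ≤ ((rank G t p u : ℕ) : ℤ))).card : ℤ) := by
    refine h2.trans ?_
    have hsub : (Mset G t p (((r : ℤ) + t v).toNat)).filter (G.Adj v) ⊆
        Finset.univ.filter (fun u => G.Adj v u ∧ (r : ℤ) + t v ≤ ((rank G t p u : ℕ) : ℤ)) := by
      intro u hu
      simp only [mem_filter, mem_univ, true_and] at hu ⊢
      obtain ⟨hu1, hu2⟩ := hu
      rw [mem_Mset] at hu1
      refine ⟨hu2, ?_⟩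
      have ht1 := Int.self_le_toNat ((r : ℤ) + t v)
      have ht2 : ((((r : ℤ) + t v).toNat : ℕ) : ℤ) ≤ ((rank G t p u : ℕ) : ℤ) := by
        exact_mod_cast hu1
      omega
    exact_mod_cast card_le_card hsub
  have hPr2 : max 0 ((r : ℤ) + p v) ≤
      ((Finset.univ.filter (fun u => G.Adj v u ∧ r ≤ rank G t p u)).card : ℤ) := by
    refine h1.trans ?_
    have heq : (Mset G t p r).filter (G.Adj v) =
        Finset.univ.filter (fun u => G.Adj v u ∧ r ≤ rank G t p u) := by
      ext u; simp [Mset, and_comm]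
    rw [heq]
  unfold localF
  rw [Nat.findGreatest_eq_iff]
  refine ⟨rank_le_n G t p v, fun _ => ⟨hPr1, hPr2⟩, fun k hk hkn hPk => ?_⟩
  obtain ⟨hk1, hk2⟩ := hPk
  simp only at hk1 hk2
  set S' : ℕ → Finset (Fin n) :=
    fun i => if i ≤ k then insert v (Mset G t p i) else Mset G t p i with hS'
  have hMsub : ∀ j, Mset G t p j ⊆ S' j := by
    intro j; by_cases h : j ≤ k <;> simp [hS', h, subset_insert]
  have hchain : SepChain G t p S' := by
    refine ⟨?_, ?_, ?_⟩
    · simp [hS', Nat.zero_le, insert_eq_self.mpr (mem_univ v), Mset]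
    · intro i
      by_cases h : i + 1 ≤ k
      · have h' : i ≤ k := by omega
        simp only [hS', if_pos h, if_pos h']
        exact insert_subset_insert _ (Mset_anti G t p (Nat.le_succ i))
      · by_cases h' : i ≤ k
        · simp only [hS', if_neg h, if_pos h']
          exact (Mset_anti G t p (Nat.le_succ i)).trans (subset_insert _ _)
        · simp only [hS', if_neg h, if_neg h']
          exact Mset_anti G t p (Nat.le_succ i)
    · intro i u hu
      by_cases hM : u ∈ Mset G t p i
      · obtain ⟨g1, g2⟩ := (M_sepchain G t p hp).2.2 i u hM
        constructor
        · exact g1.trans (by exact_mod_cast card_le_card (filter_subset_filter _ (hMsub i)))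
        · exact g2.trans (by exact_mod_cast card_le_card (filter_subset_filter _ (hMsub _)))
      · have hik : i ≤ k ∧ v = u := by
          by_cases h : i ≤ k
          · simp only [hS', if_pos h, mem_insert] at hu
            rcases hu with h' | h'
            · exact ⟨h, h'.symm⟩
            · exact absurd h' hM
          · simp only [hS', if_neg h] at hu; exact absurd hu hM
        obtain ⟨hik, rfl⟩ := hik
        have hikz : (i : ℤ) ≤ (k : ℤ) := by exact_mod_cast hik
        constructor
        · have step : Finset.univ.filter (fun u => G.Adj v u ∧ k ≤ rank G t p u) ⊆
              (S' i).filter (G.Adj v) := by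
            intro w hw
            simp only [mem_filter, mem_univ, true_and] at hw ⊢
            exact ⟨hMsub i (Mset_anti G t p hik ((mem_Mset G t p).mpr hw.2)), hw.1⟩
          have hc : ((Finset.univ.filter (fun u => G.Adj v u ∧ k ≤ rank G t p u)).card : ℤ) ≤
              (((S' i).filter (G.Adj v)).card : ℤ) := by exact_mod_cast card_le_card step
          have hmax : max 0 ((i : ℤ) + p v) ≤ max 0 ((k : ℤ) + p v) := by
            apply max_le_max le_rfl; omega
          exact hmax.trans (hk2.trans hc)
        · have step : Finset.univ.filter
              (fun u => G.Adj v u ∧ (k : ℤ) + t v ≤ ((rank G t p u : ℕ) : ℤ)) ⊆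
              (S' (((i : ℤ) + t v).toNat)).filter (G.Adj v) := by
            intro w hw
            simp only [mem_filter, mem_univ, true_and] at hw ⊢
            refine ⟨hMsub _ ((mem_Mset G t p).mpr (Int.toNat_le.mpr ?_)), hw.1⟩
            have := hw.2
            omega
          have hc : ((Finset.univ.filter
              (fun u => G.Adj v u ∧ (k : ℤ) + t v ≤ ((rank G t p u : ℕ) : ℤ))).card : ℤ) ≤
              (((S' (((i : ℤ) + t v).toNat)).filter (G.Adj v)).card : ℤ) := by
            exact_mod_cast card_le_card step
          calc (i : ℤ) ≤ (k : ℤ) := hikz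
            _ ≤ _ := hk1
            _ ≤ _ := hc
  have hkv : v ∈ S' k := by simp [hS']
  have := rank_ge G t p hchain hkv
  omega
end

section
/- Let G be a simple graph on {1,...,n}, t, p ∈ ℤⁿ with p ≤ d. Suppose y ∈ {0,...,n}ⁿ is a fixed point of the [t,p]-system on G. Then for every vertex v, y_v ≤ C_{t,p}(v), where C_{t,p}(v) is the rank of v in the maximal [t,p]-separate chain. In other words, (C_{t,p}(1),...,C_{t,p}(n)) is the unique maximal fixed point of the [t,p]-system. -/
open Finset

/-- Every fixed point `y` of the `[t,p]`-system on `G` satisfies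
`y v ≤ C_{t,p}(v)` for all `v`; i.e. the vector of ranks is the unique maximal fixed point. -/
theorem fixedPoint_le_rank {n : ℕ} (G : SimpleGraph (Fin n)) [DecidableRel G.Adj]
    (t p : Fin n → ℤ) (hp : ∀ v : Fin n, p v ≤ (G.degree v : ℤ))
    (y : Fin n → ℕ) (hy : ∀ v, y v ≤ n) (hfix : ∀ v, localF G t p y v = y v) :
    ∀ v : Fin n, y v ≤ rank G t p v := by
  classical
  -- The level sets of `y` form a `[t,p]`-separate chain.
  set S : ℕ → Finset (Fin n) := fun i => Finset.univ.filter (fun u => i ≤ y u) with hS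
  have hchain : SepChain G t p S := by
    refine ⟨?_, ?_, ?_⟩
    · simp [hS]
    · intro i
      intro u hu
      simp only [hS, Finset.mem_filter] at hu ⊢
      exact ⟨hu.1, by omega⟩
    · intro i v hv
      have hiv : i ≤ y v := by simpa [hS] using hv
      rcases Nat.eq_zero_or_pos i with rfl | hi
      · constructor
        · have hdeg : ((S 0).filter (G.Adj v)) = G.neighborFinset v := by
            ext u; simp [hS, SimpleGraph.mem_neighborFinset]
          rw [hdeg, SimpleGraph.card_neighborFinset_eq_degree]
          simpa using hp v
        · positivity
      · -- `y v ≥ 1`, so the fixed-point condition gives the two inequalities at level `y v`.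
        have hyv : y v ≠ 0 := by omega
        have hP := Nat.findGreatest_of_ne_zero (hfix v) hyv
        obtain ⟨hP1, hP2⟩ := hP
        constructor
        · -- neighbors in `S i`
          have hsub : (Finset.univ.filter (fun u => G.Adj v u ∧ y v ≤ y u)) ⊆
              (S i).filter (G.Adj v) := by
            intro u hu
            simp only [Finset.mem_filter, Finset.mem_univ, true_and, hS] at hu ⊢
            exact ⟨hiv.trans hu.2, hu.1⟩
          have hcard := Finset.card_le_card hsub
          have h0 : (0:ℤ) ≤ (((S i).filter (G.Adj v)).card : ℤ) := by positivity
          have h1 : (i:ℤ) + p v ≤ (((S i).filter (G.Adj v)).card : ℤ) := by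
            have : ((y v : ℤ)) + p v ≤
                ((Finset.univ.filter (fun u => G.Adj v u ∧ y v ≤ y u)).card : ℤ) :=
              le_trans (le_max_right _ _) hP2
            have hiy : (i:ℤ) ≤ (y v : ℤ) := by exact_mod_cast hiv
            calc (i:ℤ) + p v ≤ (y v : ℤ) + p v := by omega
              _ ≤ _ := this
              _ ≤ _ := by exact_mod_cast hcard
          exact max_le h0 h1
        · -- neighbors in `S ((i + t v).toNat)`
          set j := ((i : ℤ) + t v).toNat with hj
          have hsub : (Finset.univ.filter
              (fun u => G.Adj v u ∧ ((y v : ℤ)) + t v ≤ (y u : ℤ))) ⊆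
              (S j).filter (G.Adj v) := by
            intro u hu
            simp only [Finset.mem_filter, Finset.mem_univ, true_and, hS] at hu ⊢
            refine ⟨?_, hu.1⟩
            have hiy : (i:ℤ) ≤ (y v : ℤ) := by exact_mod_cast hiv
            have : (i:ℤ) + t v ≤ (y u : ℤ) := le_trans (by omega) hu.2
            omega
          have hcard := Finset.card_le_card hsub
          calc (i:ℤ) ≤ (y v : ℤ) := by exact_mod_cast hiv
            _ ≤ _ := hP1
            _ ≤ _ := by exact_mod_cast hcard
  intro v
  refine Nat.le_findGreatest (hy v) ⟨S, hchain, ?_⟩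
  simp [hS]
end

section
/- Let G be a simple graph on {1,...,n} and t, t', p, p' ∈ ℤⁿ with p ≤ d, p' ≤ d, t ≤ t', and p ≤ p'. Then for every vertex v, C_{t,p}(v) ≥ C_{t',p'}(v), i.e., the ranks induced by maximal separate chains are entrywise antitone in (t,p). -/
open Finset

lemma sepChain_anti {n : ℕ} {G : SimpleGraph (Fin n)} [DecidableRel G.Adj]
    {t p : Fin n → ℤ} {S : ℕ → Finset (Fin n)} (h : ∀ i, S (i + 1) ⊆ S i)
    {a b : ℕ} (hab : a ≤ b) : S b ⊆ S a := by
  induction b with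
  | zero => simpa [Nat.le_zero.mp hab]
  | succ b ih =>
    rcases Nat.lt_or_ge a (b + 1) with hlt | hge
    · exact (h b).trans (ih (Nat.lt_succ_iff.mp hlt))
    · simp [Nat.le_antisymm hab hge]

lemma sepChain_mono {n : ℕ} {G : SimpleGraph (Fin n)} [DecidableRel G.Adj]
    {t t' p p' : Fin n → ℤ} {S : ℕ → Finset (Fin n)}
    (htt : ∀ v, t v ≤ t' v) (hpp : ∀ v, p v ≤ p' v)
    (hS : SepChain G t' p' S) : SepChain G t p S := by
  obtain ⟨h0, hmono, hcond⟩ := hS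
  refine ⟨h0, hmono, fun i v hv => ?_⟩
  obtain ⟨h1, h2⟩ := hcond i v hv
  constructor
  · refine le_trans ?_ h1
    exact max_le_max le_rfl (by linarith [hpp v])
  · refine le_trans h2 ?_
    have hsub : S (((i : ℤ) + t' v).toNat) ⊆ S (((i : ℤ) + t v).toNat) :=
      sepChain_anti (G := G) (t := t') (p := p') hmono
        (Int.toNat_le_toNat (by linarith [htt v]))
    exact_mod_cast Nat.cast_le.mpr (Finset.card_le_card (Finset.filter_subset_filter _ hsub))

/-- The ranks of the maximal separate chains are entrywise antitone in
`(t, p)`. -/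
theorem rank_antitone {n : ℕ} (G : SimpleGraph (Fin n)) [DecidableRel G.Adj]
    (t t' p p' : Fin n → ℤ)
    (hp : ∀ v : Fin n, p v ≤ (G.degree v : ℤ)) (hp' : ∀ v : Fin n, p' v ≤ (G.degree v : ℤ))
    (htt : ∀ v, t v ≤ t' v) (hpp : ∀ v, p v ≤ p' v) :
    ∀ v : Fin n, rank G t' p' v ≤ rank G t p v := by
  intro v
  classical
  exact Nat.findGreatest_mono_left
    (fun i ⟨S, hS, hv⟩ => ⟨S, sepChain_mono htt hpp hS, hv⟩) n
end

section
/- Let G be a simple graph on {1,...,n}, t, p ∈ ℤⁿ with p ≤ d, and consider the [t,p]-system on G under any fair update schedule. Then the initial state d = (deg(1),...,deg(n)) reaches the stable state (C_{t,p}(1),...,C_{t,p}(n)) after finitely many update steps. -/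
open Finset

/-!
The local update map `F = localF G t p` is monotone, and `p ≤ d` gives `F d ≤ d`; hence every
asynchronous run from `d` decreases pointwise and, `ℕⁿ` being well-founded, stabilises, and
fairness makes the limit a fixed point of `F`. The rank vector `C` is the greatest post-fixed
point of `F`: testing `F` on a chain that witnesses `C v` gives `C ≤ F C`, and for `z ≤ F z` the
level sets `{u | i ≤ z u}` form a separate chain, so `z ≤ C`. As `C ≤ d`, monotonicity keeps
the run above `C`, and its limit, a fixed point, is squeezed down to `C`.
-/

section AsyncIteration

variable {ι : Type*}

def IsFair (W : ℕ → Finset ι) : Prop :=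
  ∀ v : ι, ∀ k : ℕ, ∃ l, k < l ∧ v ∈ W l

variable [DecidableEq ι]

def IsAsyncRun (F : (ι → ℕ) → ι → ℕ) (W : ℕ → Finset ι) (x : ℕ → ι → ℕ) : Prop :=
  ∀ j v, x (j + 1) v = if v ∈ W (j + 1) then F (x j) v else x j v

variable {F : (ι → ℕ) → ι → ℕ} {W : ℕ → Finset ι} {x : ℕ → ι → ℕ}

namespace IsAsyncRun

lemma le_succ_of_le (hrun : IsAsyncRun F W x) (hF : Monotone F) {y : ι → ℕ} (hy : y ≤ F y)
    {j : ℕ} (hj : y ≤ x j) : y ≤ x (j + 1) := by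
  intro v
  rw [hrun]
  split_ifs
  · exact (hy v).trans (hF hj v)
  · exact hj v

lemma le_of_le_map (hrun : IsAsyncRun F W x) (hF : Monotone F) {y : ι → ℕ} (hy : y ≤ F y)
    (h0 : y ≤ x 0) (j : ℕ) : y ≤ x j := by
  induction j with
  | zero => exact h0
  | succ j ih => exact hrun.le_succ_of_le hF hy ih

lemma succ_le (hrun : IsAsyncRun F W x) {j : ℕ} (hj : F (x j) ≤ x j) : x (j + 1) ≤ x j := by
  intro v
  rw [hrun]
  split_ifs
  exacts [hj v, le_rfl]

lemma map_le_succ (hrun : IsAsyncRun F W x) {j : ℕ} (hj : F (x j) ≤ x j) :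
    F (x j) ≤ x (j + 1) := by
  intro v
  rw [hrun]
  split_ifs
  exacts [le_rfl, hj v]

lemma map_le (hrun : IsAsyncRun F W x) (hF : Monotone F) (h0 : F (x 0) ≤ x 0) (j : ℕ) :
    F (x j) ≤ x j := by
  induction j with
  | zero => exact h0
  | succ j ih => exact (hF (hrun.succ_le ih)).trans (hrun.map_le_succ ih)

lemma antitone (hrun : IsAsyncRun F W x) (hF : Monotone F) (h0 : F (x 0) ≤ x 0) :
    Antitone x :=
  antitone_nat_of_succ_le fun j => hrun.succ_le (hrun.map_le hF h0 j)

lemma map_eq_of_stable (hrun : IsAsyncRun F W x) (hfair : IsFair W) {k : ℕ}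
    (hk : ∀ j, k ≤ j → x j = x k) : F (x k) = x k := by
  funext v
  obtain ⟨l, hkl, hv⟩ := hfair v k
  obtain ⟨m, rfl⟩ : ∃ m, l = m + 1 := ⟨l - 1, by omega⟩
  have h := hrun m v
  rwa [if_pos hv, hk m (by omega), hk (m + 1) (by omega), eq_comm] at h

theorem eventually_eq_of_isGreatest [Finite ι] (hrun : IsAsyncRun F W x) (hF : Monotone F)
    (hfair : IsFair W) (h0 : F (x 0) ≤ x 0) {y : ι → ℕ} (hy : IsGreatest {z | z ≤ F z} y)
    (hy0 : y ≤ x 0) : ∃ k, ∀ j, k ≤ j → x j = y := by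
  obtain ⟨k, hk⟩ := WellFoundedLT.antitone_chain_condition (hrun.antitone hF h0)
  have hstable : ∀ j, k ≤ j → x j = x k := fun j hj => (hk j hj).symm
  have hfixed := hrun.map_eq_of_stable hfair hstable
  refine ⟨k, fun j hj => ?_⟩
  rw [hstable j hj]
  exact le_antisymm (hy.2 hfixed.ge) (hrun.le_of_le_map hF hy.1 hy0 k)

end IsAsyncRun

end AsyncIteration

section SeparateChain

variable {n : ℕ} {G : SimpleGraph (Fin n)} [DecidableRel G.Adj] {t p : Fin n → ℤ}

lemma card_le_degree_of_forall_adj {v : Fin n} {A : Finset (Fin n)} (hA : ∀ u ∈ A, G.Adj v u) :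
    #A ≤ G.degree v := by
  rw [← G.card_neighborFinset_eq_degree]
  exact card_le_card fun u hu => by simpa using hA u hu

lemma card_filter_adj_eq_degree (v : Fin n) : #(univ.filter (G.Adj v)) = G.degree v := by
  rw [← G.neighborFinset_eq_filter, G.card_neighborFinset_eq_degree]

open Classical in
lemma SepChain.le_rank {S : ℕ → Finset (Fin n)} (hS : SepChain G t p S) {i : ℕ} {v : Fin n}
    (hv : v ∈ S i) : i ≤ rank G t p v := by
  have hi := (hS.2.2 i v hv).2
  have hcard := card_le_univ ((S ((i + t v).toNat)).filter (G.Adj v))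
  rw [Fintype.card_fin] at hcard
  exact Nat.le_findGreatest (by omega) ⟨S, hS, hv⟩

lemma sepChain_univ_empty (hp : ∀ v, p v ≤ (G.degree v : ℤ)) :
    SepChain G t p (fun i => if i = 0 then univ else ∅) := by
  refine ⟨rfl, fun i => by simp, fun i v hv => ?_⟩
  obtain rfl : i = 0 := by by_contra h; simp [h] at hv
  simp only [if_true, card_filter_adj_eq_degree]
  exact ⟨by have := hp v; omega, by simp⟩

open Classical in
lemma exists_sepChain_mem_rank (hp : ∀ v, p v ≤ (G.degree v : ℤ)) (v : Fin n) :
    ∃ S, SepChain G t p S ∧ v ∈ S (rank G t p v) :=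
  Nat.findGreatest_spec (P := fun i => ∃ S, SepChain G t p S ∧ v ∈ S i) (Nat.zero_le n)
    ⟨_, sepChain_univ_empty hp, by simp⟩

lemma rank_le_degree (hp : ∀ v, p v ≤ (G.degree v : ℤ)) : rank G t p ≤ fun v => G.degree v := by
  intro v
  dsimp only
  obtain ⟨S, hS, hv⟩ := exists_sepChain_mem_rank (t := t) hp v
  have := (hS.2.2 _ v hv).2
  have := card_le_degree_of_forall_adj
    (A := (S ((rank G t p v + t v).toNat)).filter (G.Adj v)) fun u hu => (mem_filter.1 hu).2
  omega

end SeparateChain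

section LocalUpdate

variable {n : ℕ} {G : SimpleGraph (Fin n)} [DecidableRel G.Adj] {t p : Fin n → ℤ}

lemma localF_monotone : Monotone (localF G t p) := by
  intro x y hxy v
  refine Nat.findGreatest_mono_left (fun k hk => ⟨hk.1.trans ?_, hk.2.trans ?_⟩) n
  all_goals
    refine Nat.cast_le.2 (card_le_card (monotone_filter_right _ fun u _ => And.imp_right ?_))
  · exact fun h => h.trans (Nat.cast_le.2 (hxy u))
  · exact fun h => h.trans (hxy u)

lemma localF_spec_of_ne_zero {x : Fin n → ℕ} {v : Fin n} (h : localF G t p x v ≠ 0) :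
    (localF G t p x v : ℤ) ≤
        #(univ.filter (fun u => G.Adj v u ∧ (localF G t p x v : ℤ) + t v ≤ (x u : ℤ))) ∧
      max 0 ((localF G t p x v : ℤ) + p v) ≤
        #(univ.filter (fun u => G.Adj v u ∧ localF G t p x v ≤ x u)) :=
  Nat.findGreatest_of_ne_zero rfl h

lemma localF_spec (hp : ∀ v, p v ≤ (G.degree v : ℤ)) (x : Fin n → ℕ) (v : Fin n) :
    (localF G t p x v : ℤ) ≤
        #(univ.filter (fun u => G.Adj v u ∧ (localF G t p x v : ℤ) + t v ≤ (x u : ℤ))) ∧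
      max 0 ((localF G t p x v : ℤ) + p v) ≤
        #(univ.filter (fun u => G.Adj v u ∧ localF G t p x v ≤ x u)) := by
  obtain h | h := eq_or_ne (localF G t p x v) 0
  · simpa [h, card_filter_adj_eq_degree] using hp v
  · exact localF_spec_of_ne_zero h

lemma localF_le_degree (x : Fin n → ℕ) : localF G t p x ≤ fun v => G.degree v := by
  intro v
  dsimp only
  obtain h | h := eq_or_ne (localF G t p x v) 0
  · simp [h]
  · have := (localF_spec_of_ne_zero h).1
    have := card_le_degree_of_forall_adj
      (A := univ.filter fun u => G.Adj v u ∧ (localF G t p x v : ℤ) + t v ≤ (x u : ℤ))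
      fun u hu => (mem_filter.1 hu).2.1
    omega

lemma sepChain_filter_le (hp : ∀ v, p v ≤ (G.degree v : ℤ)) {z : Fin n → ℕ}
    (hz : z ≤ localF G t p z) : SepChain G t p (fun i => univ.filter (i ≤ z ·)) := by
  refine ⟨by simp, fun i u => by simp only [mem_filter, mem_univ, true_and]; omega,
    fun i w hw => ?_⟩
  have hik : i ≤ localF G t p z w := (mem_filter.1 hw).2.trans (hz w)
  obtain ⟨hk₁, hk₂⟩ := localF_spec hp z w
  generalize localF G t p z w = k at hik hk₁ hk₂
  constructor
  · calc max 0 ((i : ℤ) + p w) ≤ max 0 ((k : ℤ) + p w) := by gcongr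
      _ ≤ #(univ.filter fun u => G.Adj w u ∧ k ≤ z u) := hk₂
      _ ≤ _ := Nat.cast_le.2 <| card_le_card fun u hu => by
        simp only [mem_filter, mem_univ, true_and] at hu ⊢; exact ⟨by omega, hu.1⟩
  · calc (i : ℤ) ≤ k := Nat.cast_le.2 hik
      _ ≤ _ := hk₁
      _ ≤ _ := Nat.cast_le.2 <| card_le_card fun u hu => by
        simp only [mem_filter, mem_univ, true_and] at hu ⊢; exact ⟨by omega, hu.1⟩

open Classical in
lemma rank_le_localF_rank (hp : ∀ v, p v ≤ (G.degree v : ℤ)) :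
    rank G t p ≤ localF G t p (rank G t p) := by
  intro v
  obtain ⟨S, hS, hv⟩ := exists_sepChain_mem_rank hp v
  obtain ⟨h₁, h₂⟩ := hS.2.2 _ v hv
  unfold localF
  refine Nat.le_findGreatest (Nat.findGreatest_le n) ⟨h₂.trans ?_, h₁.trans ?_⟩
  all_goals refine Nat.cast_le.2 <| card_le_card fun u hu => ?_
  all_goals
    simp only [mem_filter, mem_univ, true_and] at hu ⊢
    have := hS.le_rank hu.1
    refine ⟨hu.2, by omega⟩

theorem isGreatest_rank (hp : ∀ v, p v ≤ (G.degree v : ℤ)) :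
    IsGreatest {z | z ≤ localF G t p z} (rank G t p) :=
  ⟨rank_le_localF_rank hp, fun _ hz v => (sepChain_filter_le hp hz).le_rank (by simp)⟩

end LocalUpdate

/-- Under any fair update schedule, the `[t,p]`-system on `G` started from
the degree sequence reaches the stable state `(C_{t,p}(1),…,C_{t,p}(n))` in finitely many
steps. -/
theorem degree_reaches_rank {n : ℕ} (G : SimpleGraph (Fin n)) [DecidableRel G.Adj]
    (t p : Fin n → ℤ) (hp : ∀ v : Fin n, p v ≤ (G.degree v : ℤ))
    (W : ℕ → Finset (Fin n)) (hfair : ∀ v : Fin n, ∀ k : ℕ, ∃ l, k < l ∧ v ∈ W l)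
    (x : ℕ → Fin n → ℕ) (hx0 : ∀ v, x 0 v = G.degree v)
    (hstep : ∀ j v, x (j + 1) v = if v ∈ W (j + 1) then localF G t p (x j) v else x j v) :
    ∃ k : ℕ, ∀ j, k ≤ j → ∀ v : Fin n, x j v = rank G t p v := by
  have hrun : IsAsyncRun (localF G t p) W x := hstep
  have hdeg : x 0 = fun v => G.degree v := funext hx0
  obtain ⟨k, hk⟩ := hrun.eventually_eq_of_isGreatest localF_monotone hfair
    (hdeg ▸ localF_le_degree _) (isGreatest_rank hp) (hdeg ▸ rank_le_degree hp)
  exact ⟨k, fun j hj => congrFun (hk j hj)⟩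
end

section
/- Let G be a simple graph with no isolated vertices, and let λ(G) = max{|deg(u) − deg(v)| : u adjacent to v}. Let t be a constant vector with t_v = t for all v where t ≤ −λ(G), and let p_v ≤ −deg(v) for all v. Then C_t(v) = deg(v) for every vertex v. -/
open Finset

/-- `lam G = λ(G)`, the maximum absolute degree difference over adjacent pairs. -/
def lam {n : ℕ} (G : SimpleGraph (Fin n)) [DecidableRel G.Adj] : ℕ :=
  Finset.univ.sup (fun e : Fin n × Fin n =>
    if G.Adj e.1 e.2 then ((G.degree e.1 : ℤ) - (G.degree e.2 : ℤ)).natAbs else 0)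

/-
Let `S i` be the set of vertices of degree at least `i`. This is a separate chain: the
`p`-condition is vacuous since `i + p v ≤ deg v + p v ≤ 0`, and each neighbour `u` of a vertex
`w ∈ S i` has `deg u ≥ deg w - λ(G) ≥ i + t`, so all `deg w ≥ i` neighbours of `w` lie in
`S (i + t)`. Conversely, in any separate chain a vertex of the `i`-th member has at least `i`
neighbours, so its rank is at most its degree.
-/

namespace SepChain

variable {n : ℕ} {G : SimpleGraph (Fin n)} [DecidableRel G.Adj]

theorem degree_sub_degree_le_lam {u w : Fin n} (h : G.Adj u w) :
    (G.degree u : ℤ) - G.degree w ≤ lam G := by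
  have hsup := Finset.le_sup (f := fun e : Fin n × Fin n =>
    if G.Adj e.1 e.2 then ((G.degree e.1 : ℤ) - (G.degree e.2 : ℤ)).natAbs else 0)
    (Finset.mem_univ (u, w))
  simp only [h, if_true] at hsup
  exact Int.le_natAbs.trans (Nat.cast_le.2 hsup)

variable (G) in
def degreeChain (i : ℕ) : Finset (Fin n) :=
  univ.filter fun w => i ≤ G.degree w

@[simp]
theorem mem_degreeChain {i : ℕ} {w : Fin n} : w ∈ degreeChain G i ↔ i ≤ G.degree w := by
  simp [degreeChain]

theorem neighborFinset_subset_degreeChain {t : ℤ} (ht : t ≤ -(lam G : ℤ)) {i : ℕ} {w : Fin n}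
    (hw : w ∈ degreeChain G i) :
    G.neighborFinset w ⊆ (degreeChain G ((i : ℤ) + t).toNat).filter (G.Adj w) := by
  intro u hu
  rw [SimpleGraph.mem_neighborFinset] at hu
  have hdeg := degree_sub_degree_le_lam hu
  rw [mem_degreeChain] at hw
  rw [mem_filter, mem_degreeChain]
  exact ⟨by omega, hu⟩

theorem sepChain_degreeChain {t p : Fin n → ℤ} (ht : ∀ v, t v ≤ -(lam G : ℤ))
    (hp : ∀ v, p v ≤ -(G.degree v : ℤ)) : SepChain G t p (degreeChain G) := by
  refine ⟨by ext; simp, fun i w hw => by simp only [mem_degreeChain] at hw ⊢; omega, ?_⟩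
  intro i w hw
  have hdeg := mem_degreeChain.1 hw
  constructor
  · have hpw := hp w
    rw [max_eq_left (by omega)]
    positivity
  · have hcard := card_le_card (neighborFinset_subset_degreeChain (ht w) hw)
    rw [G.card_neighborFinset_eq_degree] at hcard
    omega

theorem le_degree_of_mem {t p : Fin n → ℤ} {A : Finset (Fin n)} {S : ℕ → Finset (Fin n)}
    (hS : SepChainFrom G t p A S) {i : ℕ} {v : Fin n} (hv : v ∈ S i) : i ≤ G.degree v := by
  have hi := (hS.2.2 i v hv).2
  have hcard : ((S ((i : ℤ) + t v).toNat).filter (G.Adj v)).card ≤ G.degree v := by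
    rw [← G.card_neighborFinset_eq_degree]
    exact card_le_card fun u hu => (G.mem_neighborFinset v u).2 (mem_filter.1 hu).2
  omega

theorem rank_le_degree (t p : Fin n → ℤ) (v : Fin n) : rank G t p v ≤ G.degree v := by
  classical
  by_cases h0 : rank G t p v = 0
  · omega
  obtain ⟨S, hS, hv⟩ := Nat.findGreatest_of_ne_zero rfl h0
  exact le_degree_of_mem hS hv

theorem le_rank_of_mem {t p : Fin n → ℤ} {S : ℕ → Finset (Fin n)} (hS : SepChain G t p S)
    {i : ℕ} {v : Fin n} (hv : v ∈ S i) : i ≤ rank G t p v := by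
  classical
  have hin : i ≤ n :=
    (le_degree_of_mem hS hv).trans (by simpa using (G.degree_lt_card_verts v).le)
  exact Nat.le_findGreatest hin ⟨S, hS, hv⟩

end SepChain

open SepChain in
theorem rank_eq_degree_general {n : ℕ} (G : SimpleGraph (Fin n)) [DecidableRel G.Adj]
    (t : ℤ) (ht : t ≤ -(lam G : ℤ))
    (p : Fin n → ℤ) (hp : ∀ v : Fin n, p v ≤ -(G.degree v : ℤ)) :
    ∀ v : Fin n, rank G (fun _ => t) p v = G.degree v := fun v =>
  (rank_le_degree _ p v).antisymm
    (le_rank_of_mem (sepChain_degreeChain (fun _ => ht) hp) (mem_degreeChain.2 le_rfl))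

/-- If `G` has no isolated vertices, `t` is constant with `t ≤ -λ(G)`, and
`p v ≤ -deg v` for all `v`, then `C_t(v) = deg v` for every vertex `v`. -/
theorem rank_eq_degree {n : ℕ} (G : SimpleGraph (Fin n)) [DecidableRel G.Adj]
    (hiso : ∀ v : Fin n, 0 < G.degree v)
    (t : ℤ) (ht : t ≤ -(lam G : ℤ))
    (p : Fin n → ℤ) (hp : ∀ v : Fin n, p v ≤ -(G.degree v : ℤ)) :
    ∀ v : Fin n, rank G (fun _ => t) p v = G.degree v :=
  rank_eq_degree_general G t ht p hp
end

section
/- Let G be a simple graph on {1,...,n}, t, p ∈ ℤⁿ with p ≤ d. For any vertex v and any fixed point y of the [t,p]-system with y ≤ d and y_v > 0, there exists a [t~,p~]-separate chain S_0 ≥ S_1 ≥ ... ≥ S_m of the induced subgraph S_0 ≤ G (where t~, p~ are the restrictions of t, p to V(S_0)) such that v ∈ S_{y_v}. -/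
open Finset

/-- For any fixed point `y ≤ d` of the `[t,p]`-system and any vertex `v`
with `y v > 0`, there is a vertex set `A` and a `[t,p]`-separate chain of the induced
subgraph of `G` on `A` (with `t, p` restricted to `A`) whose `y v`-th member contains `v`. -/
theorem fixedPoint_chain_through {n : ℕ} (G : SimpleGraph (Fin n)) [DecidableRel G.Adj]
    (t p : Fin n → ℤ) (hp : ∀ v : Fin n, p v ≤ (G.degree v : ℤ))
    (y : Fin n → ℕ) (hyd : ∀ v, y v ≤ G.degree v)
    (hfix : ∀ v, localF G t p y v = y v)
    (v : Fin n) (hv : 0 < y v) :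
    ∃ (A : Finset (Fin n)) (S : ℕ → Finset (Fin n)),
      SepChainFrom G t p A S ∧ v ∈ S (y v) := by
  classical
  set S : ℕ → Finset (Fin n) := fun i => Finset.univ.filter (fun u => i ≤ y u) with hS
  have hmemS : ∀ i u, u ∈ S i ↔ i ≤ y u := by
    intro i u; simp [hS]
  refine ⟨S 0, S, ⟨rfl, ?_, ?_⟩, (hmemS _ _).2 le_rfl⟩
  · intro i u hu
    rw [hmemS] at hu ⊢; omega
  · intro i w hw
    rw [hmemS] at hw
    have hfilt : ∀ j, (S j).filter (G.Adj w)
        = Finset.univ.filter (fun u => G.Adj w u ∧ j ≤ y u) := by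
      intro j; ext u; simp [hS, and_comm]
    rcases Nat.eq_zero_or_pos (y w) with h0 | hpos
    · have hi : i = 0 := by omega
      subst hi
      constructor
      · rw [hfilt]
        have : Finset.univ.filter (fun u => G.Adj w u ∧ 0 ≤ y u)
            = G.neighborFinset w := by
          ext u; simp [SimpleGraph.mem_neighborFinset]
        rw [this]
        have := hp w
        rw [← G.card_neighborFinset_eq_degree] at this
        omega
      · positivity
    · have hP := Nat.findGreatest_of_ne_zero (hfix w) (by omega)
      obtain ⟨hP1, hP2⟩ := hP
      constructor
      · rw [hfilt]
        have hsub : Finset.univ.filter (fun u => G.Adj w u ∧ y w ≤ y u)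
            ⊆ Finset.univ.filter (fun u => G.Adj w u ∧ i ≤ y u) := by
          intro u hu; simp only [Finset.mem_filter] at hu ⊢
          exact ⟨hu.1, hu.2.1, by omega⟩
        have hcard := Finset.card_le_card hsub
        have h2 : max 0 ((i : ℤ) + p w) ≤ max 0 ((y w : ℤ) + p w) := by
          have : (i : ℤ) ≤ (y w : ℤ) := by exact_mod_cast hw
          omega
        calc max 0 ((i : ℤ) + p w) ≤ max 0 ((y w : ℤ) + p w) := h2
          _ ≤ _ := le_trans hP2 (by exact_mod_cast hcard)
      · rw [hfilt]
        have hsub : Finset.univ.filter (fun u => G.Adj w u ∧ (y w : ℤ) + t w ≤ (y u : ℤ))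
            ⊆ Finset.univ.filter (fun u => G.Adj w u ∧ ((i : ℤ) + t w).toNat ≤ y u) := by
          intro u hu; simp only [Finset.mem_filter] at hu ⊢
          refine ⟨hu.1, hu.2.1, ?_⟩
          rw [Int.toNat_le]
          have : (i : ℤ) ≤ (y w : ℤ) := by exact_mod_cast hw
          omega
        have hcard := Finset.card_le_card hsub
        have : (i : ℤ) ≤ (y w : ℤ) := by exact_mod_cast hw
        calc (i : ℤ) ≤ (y w : ℤ) := this
          _ ≤ _ := le_trans hP1 (by exact_mod_cast hcard)
end
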